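/- In a suitable permuted basis, any mixed Weyl superoperator Φ_p = Σ_{kl} p_{kl} U_{kl} ⊗ conj(U_{kl}) of order N² is block diagonal with N circulant blocks of size N: for the basis {|j⊕k, j⟩}, ⟨j⊕k, j| Φ_p |j'⊕k', j'⟩ = δ_{kk'} Σ_n p_{(j−j' mod N), n} ω^{nk}. Consequently the k-th block equals Σ_{k'} (Σ_l p_{k'l} ω^{kl}) X^{k'}, and the k=0 block equals the classical transition matrix T = Σ_{k'} q_{k'} X^{k'} with q_{k'} = Σ_l p_{k'l}. -/

import Mathlib

open Matrix Complex
open scoped Kronecker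

/-- The `N`-th root of unity `ω = exp(2πi/N)`. -/
noncomputable def omega (N : ℕ) : ℂ := Complex.exp (2 * Real.pi * Complex.I / N)

/-- The cyclic shift matrix `X` with `X |i⟩ = |i ⊕ 1⟩`. -/
def Xmat (N : ℕ) [NeZero N] : Matrix (Fin N) (Fin N) ℂ :=
  fun i j => if i = j + 1 then 1 else 0

/-- The clock matrix `Z = diag(1, ω, ..., ω^{N-1})`. -/
noncomputable def Zmat (N : ℕ) [NeZero N] : Matrix (Fin N) (Fin N) ℂ :=
  Matrix.diagonal (fun j => omega N ^ (j : ℕ))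

/-- The Weyl matrices `U_{kl} = X^k Z^l`. -/
noncomputable def WeylU (N : ℕ) [NeZero N] (k l : Fin N) : Matrix (Fin N) (Fin N) ℂ :=
  Xmat N ^ (k : ℕ) * Zmat N ^ (l : ℕ)

/-- The mixed Weyl superoperator `Φ_p = Σ_{kl} p_{kl} U_{kl} ⊗ conj(U_{kl})`. -/
noncomputable def weylSuper (N : ℕ) [NeZero N] (p : Fin N → Fin N → ℂ) :
    Matrix (Fin N × Fin N) (Fin N × Fin N) ℂ :=
  ∑ k, ∑ l, p k l • (WeylU N k l ⊗ₖ (WeylU N k l).map (starRingEnd ℂ))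

/-! `⟨i| X^m Z^l |j⟩ = [i = j + m] ω^{jl}`, so the entry `⟨j+k, j| U_{ml} ⊗ conj U_{ml} |j'+k', j'⟩`
vanishes unless `m = j - j'` and `k = k'`, and then equals `ω^{(j'+k)l} conj(ω^{j'l}) = ω^{kl}`
because `ω^N = 1` and `|ω| = 1`. Hence the `k`-th block depends on `j - j'` only: it is the
circulant matrix of `d ↦ Σ_l p_{dl} ω^{kl}`, and `Σ_d c_d X^d` is the circulant matrix of `c`
since `X^d` is the circulant matrix of the indicator of `d`. -/

open ComplexConjugate

section WeylCalculus

variable {N : ℕ} [NeZero N]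

theorem isPrimitiveRoot_omega : IsPrimitiveRoot (omega N) N :=
  Complex.isPrimitiveRoot_exp N (NeZero.ne N)

theorem omega_pow_mod (n : ℕ) : omega N ^ (n % N) = omega N ^ n := by
  conv_rhs => rw [← Nat.mod_add_div n N, pow_add, pow_mul, isPrimitiveRoot_omega.pow_eq_one,
    one_pow, mul_one]

theorem omega_pow_val_add (a b : Fin N) :
    omega N ^ ((a + b : Fin N) : ℕ) = omega N ^ (a : ℕ) * omega N ^ (b : ℕ) := by
  rw [Fin.val_add, omega_pow_mod, pow_add]

theorem omega_pow_mul_conj (n : ℕ) : omega N ^ n * conj (omega N ^ n) = 1 := by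
  rw [Complex.mul_conj, Complex.normSq_eq_norm_sq, norm_pow,
    isPrimitiveRoot_omega.norm'_eq_one (NeZero.ne N)]
  simp

theorem Xmat_eq_circulant : Xmat N = circulant (Pi.single 1 1) := by
  ext i j
  simp [Xmat, circulant_apply, Pi.single_apply, sub_eq_iff_eq_add']

section NatCast

open scoped Fin.NatCast

theorem Xmat_pow_eq_circulant (m : ℕ) : Xmat N ^ m = circulant (Pi.single (m : Fin N) 1) := by
  induction m with
  | zero => simp
  | succ m ih =>
    rw [pow_succ, ih, Xmat_eq_circulant, circulant_mul]
    congr 1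
    ext i
    simp [mulVec, dotProduct, circulant_apply, Pi.single_apply, sub_eq_iff_eq_add]

end NatCast

theorem Xmat_pow_val (k : Fin N) : Xmat N ^ (k : ℕ) = circulant (Pi.single k 1) := by
  simpa using Xmat_pow_eq_circulant (N := N) k

theorem sum_smul_Xmat_pow (c : Fin N → ℂ) : ∑ k, c k • Xmat N ^ (k : ℕ) = circulant c := by
  ext i j
  simp [Xmat_pow_val, Matrix.sum_apply, circulant_apply, Pi.single_apply]

theorem WeylU_apply (k l i j : Fin N) :
    WeylU N k l i j = if i = j + k then (omega N ^ (j : ℕ)) ^ (l : ℕ) else 0 := by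
  simp [WeylU, Zmat, diagonal_pow, Xmat_pow_val, circulant_apply, Pi.single_apply,
    sub_eq_iff_eq_add']

theorem weylSuper_apply (p : Fin N → Fin N → ℂ) (a b c d : Fin N) :
    weylSuper N p (a, b) (c, d) =
      ∑ m, ∑ l, p m l * (WeylU N m l a c * conj (WeylU N m l b d)) := by
  simp [weylSuper, Matrix.sum_apply, kroneckerMap_apply]

theorem WeylU_mul_conj_WeylU (m l j k j' k' : Fin N) :
    WeylU N m l (j + k) (j' + k') * conj (WeylU N m l j j') =
      if m = j - j' ∧ k = k' then (omega N ^ (k : ℕ)) ^ (l : ℕ) else 0 := by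
  simp only [WeylU_apply]
  by_cases hm : m = j - j'
  · subst hm
    by_cases hk : k = k'
    · subst hk
      rw [if_pos (by abel), if_pos (by abel), if_pos ⟨rfl, rfl⟩, omega_pow_val_add, mul_pow,
        mul_right_comm, ← pow_mul (omega N) j', omega_pow_mul_conj, one_mul]
    · have : j + k ≠ j' + k' + (j - j') := fun h => hk (add_left_cancel (h.trans (by abel)))
      simp [hk, this]
  · have : j ≠ j' + m := fun h => hm (by rw [h]; abel)
    simp [hm, this]

theorem weylSuper_apply_add (p : Fin N → Fin N → ℂ) (j k j' k' : Fin N) :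
    weylSuper N p (j + k, j) (j' + k', j') =
      if k = k' then ∑ l, p (j - j') l * omega N ^ ((l : ℕ) * (k : ℕ)) else 0 := by
  simp only [weylSuper_apply, WeylU_mul_conj_WeylU, ← pow_mul']
  split_ifs with hk <;> simp [hk]

theorem weylSuper_block_eq_circulant (p : Fin N → Fin N → ℂ) (k : Fin N) :
    (fun j j' : Fin N => weylSuper N p (j + k, j) (j' + k, j')) =
      circulant fun d => ∑ l, p d l * omega N ^ ((k : ℕ) * (l : ℕ)) := by
  ext j j'
  simp [weylSuper_apply_add, circulant_apply, mul_comm (k : ℕ)]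

end WeylCalculus

/-- In the permuted basis `|j⊕k, j⟩`, a mixed Weyl superoperator is block diagonal with
`N` circulant blocks of size `N`: the matrix element is
`δ_{kk'} Σ_n p_{j−j', n} ω^{nk}`; the `k`-th block equals
`Σ_{k'} (Σ_l p_{k'l} ω^{kl}) X^{k'}`; and the `0`-th block is the classical transition
matrix `Σ_{k'} q_{k'} X^{k'}` with `q_{k'} = Σ_l p_{k'l}`. -/
theorem weylSuper_block_diagonal (N : ℕ) [NeZero N] (p : Fin N → Fin N → ℂ) :
    (∀ j k j' k' : Fin N,
      weylSuper N p (j + k, j) (j' + k', j') =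
        if k = k' then ∑ n : Fin N, p (j - j') n * omega N ^ ((n : ℕ) * (k : ℕ)) else 0) ∧
    (∀ k : Fin N,
      (fun j j' : Fin N => weylSuper N p (j + k, j) (j' + k, j')) =
        ∑ k' : Fin N, (∑ l : Fin N, p k' l * omega N ^ ((k : ℕ) * (l : ℕ))) •
          Xmat N ^ (k' : ℕ)) ∧
    ((fun j j' : Fin N => weylSuper N p (j + 0, j) (j' + 0, j')) =
        ∑ k' : Fin N, (∑ l : Fin N, p k' l) • Xmat N ^ (k' : ℕ)) := by
  have block (k : Fin N) := (weylSuper_block_eq_circulant p k).trans (sum_smul_Xmat_pow _).symm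
  refine ⟨weylSuper_apply_add p, block, ?_⟩
  simpa using block 0
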